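/- Let 1 < m < 2 and let G(x) = e^{−x²/2}/√(2π) be the Gaussian kernel. Set σ² = (m−1)/(2−m), ν_∞ = (2π)^{m/2−1} (m−1)^{(m−1)/2} (2−m)^{(2−m)/2}, and ρ_∞(x) = e^{−x²/(2σ²)}/√(2πσ²). Then ρ_∞ has unit mass, ∫_ℝ ρ_∞(x) dx = 1, and the pair (ν_∞, ρ_∞) solves the nonlinear eigenvalue problem ν_∞ ρ_∞(x)^{m−1} = (G ∗ ρ_∞)(x) = (1/√(2π)) ∫_ℝ e^{−(x−y)²/2} ρ_∞(y) dy for all x ∈ ℝ. -/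

import Mathlib

/-!
Write `gaussDensity v` for the centred normal density of variance `v`, so that
`ρ_∞ = gaussDensity σ²` and `G = gaussDensity 1`. Convolution of Gaussians adds variances,
so `G ∗ ρ_∞ = gaussDensity (1 + σ²)`. A power `p > 0` of `gaussDensity v` is a constant
multiple of `gaussDensity (v / p)`, and for `p = m - 1` one has `σ² / (m - 1) = 1 + σ²`,
while `ν_∞` is exactly the reciprocal of that constant.
-/

open Set MeasureTheory Real

/-- The Gaussian limiting profile `ρ_∞(x) = e^{−x²/(2σ²)}/√(2πσ²)` with
`σ² = (m−1)/(2−m)`. -/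
noncomputable def gaussProfile (m x : ℝ) : ℝ :=
  Real.exp (-x ^ 2 / (2 * ((m - 1) / (2 - m)))) /
    Real.sqrt (2 * Real.pi * ((m - 1) / (2 - m)))

/-- The critical diffusion constant
`ν_∞ = (2π)^{m/2−1} (m−1)^{(m−1)/2} (2−m)^{(2−m)/2}`. -/
noncomputable def nuInfty (m : ℝ) : ℝ :=
  (2 * Real.pi) ^ (m / 2 - 1) * (m - 1) ^ ((m - 1) / 2) * (2 - m) ^ ((2 - m) / 2)

/-- Unlike `ProbabilityTheory.gaussianPDFReal 0 v`, the variance is real, so that `v / p` and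
`a + b` need no coercions. -/
noncomputable def gaussDensity (v x : ℝ) : ℝ :=
  exp (-x ^ 2 / (2 * v)) / √(2 * π * v)

theorem gaussProfile_eq_gaussDensity (m x : ℝ) :
    gaussProfile m x = gaussDensity ((m - 1) / (2 - m)) x := rfl

theorem gaussDensity_one (x : ℝ) : gaussDensity 1 x = (√(2 * π))⁻¹ * exp (-x ^ 2 / 2) := by
  simp [gaussDensity, div_eq_inv_mul]

section

variable {v : ℝ}

theorem integral_exp_neg_sq_div (hv : 0 < v) : ∫ x, exp (-x ^ 2 / (2 * v)) = √(2 * π * v) := by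
  have h : ∀ x : ℝ, -x ^ 2 / (2 * v) = -(2 * v)⁻¹ * x ^ 2 := fun x => by ring
  simp_rw [h, integral_gaussian]
  congr 1
  field_simp

theorem integral_gaussDensity (hv : 0 < v) : ∫ x, gaussDensity v x = 1 := by
  simp only [gaussDensity]
  rw [integral_div, integral_exp_neg_sq_div hv, div_self (by positivity)]

theorem gaussDensity_rpow (hv : 0 < v) {p : ℝ} (hp : 0 < p) (x : ℝ) :
    gaussDensity v x ^ p = (2 * π * v) ^ ((1 - p) / 2) / √p * gaussDensity (v / p) x := by
  have h2πv : 0 < 2 * π * v := by positivity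
  have hexp : exp (-x ^ 2 / (2 * v)) ^ p = exp (-x ^ 2 / (2 * (v / p))) := by
    rw [← exp_mul]; congr 1; field_simp
  have hsqrt : √(2 * π * (v / p)) = √(2 * π * v) / √p := by
    rw [← mul_div_assoc, sqrt_div' _ hp.le]
  have hpow : (2 * π * v) ^ ((1 - p) / 2) = √(2 * π * v) / √(2 * π * v) ^ p := by
    rw [sqrt_eq_rpow, ← rpow_mul h2πv.le, ← rpow_sub h2πv]; ring_nf
  rw [gaussDensity, gaussDensity, div_rpow (exp_pos _).le (sqrt_nonneg _), hexp, hsqrt, hpow]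
  have : 0 < √p := by positivity
  field_simp

end

theorem neg_sq_div_add_neg_sq_div {a b : ℝ} (ha : 0 < a) (hb : 0 < b) (x y : ℝ) :
    -(x - y) ^ 2 / (2 * a) + -y ^ 2 / (2 * b) =
      -x ^ 2 / (2 * (a + b)) + -(y - b * x / (a + b)) ^ 2 / (2 * (a * b / (a + b))) := by
  field_simp
  ring

theorem integral_gaussDensity_sub_mul_gaussDensity {a b : ℝ} (ha : 0 < a) (hb : 0 < b) (x : ℝ) :
    ∫ y, gaussDensity a (x - y) * gaussDensity b y = gaussDensity (a + b) x := by
  have hw : 0 < a * b / (a + b) := by positivity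
  have hsplit : ∀ y, gaussDensity a (x - y) * gaussDensity b y =
      exp (-x ^ 2 / (2 * (a + b))) / (√(2 * π * a) * √(2 * π * b)) *
        exp (-(y - b * x / (a + b)) ^ 2 / (2 * (a * b / (a + b)))) := fun y => by
    rw [gaussDensity, gaussDensity, div_mul_div_comm, ← exp_add,
      neg_sq_div_add_neg_sq_div ha hb, exp_add]
    ring
  have hsqrt :
      √(2 * π * a) * √(2 * π * b) = √(2 * π * (a + b)) * √(2 * π * (a * b / (a + b))) := by
    rw [← sqrt_mul (by positivity), ← sqrt_mul (by positivity)]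
    congr 1
    field_simp
  simp_rw [hsplit]
  rw [integral_const_mul,
    integral_sub_right_eq_self (fun y => exp (-y ^ 2 / (2 * (a * b / (a + b))))),
    integral_exp_neg_sq_div hw, hsqrt, gaussDensity]
  have : 0 < √(2 * π * (a * b / (a + b))) := by positivity
  field_simp

theorem nuInfty_mul_eq_one {m : ℝ} (hm1 : 1 < m) (hm2 : m < 2) :
    nuInfty m * ((2 * π * ((m - 1) / (2 - m))) ^ ((1 - (m - 1)) / 2) / √(m - 1)) = 1 := by
  have h2π : 0 < 2 * π := by positivity
  have hm1' : 0 < m - 1 := by linarith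
  have hm2' : 0 < 2 - m := by linarith
  rw [show (1 - (m - 1)) / 2 = (2 - m) / 2 by ring, mul_rpow h2π.le (div_pos hm1' hm2').le,
    div_rpow hm1'.le hm2'.le, sqrt_eq_rpow, nuInfty]
  have h2πpow : (2 * π) ^ (m / 2 - 1) * (2 * π) ^ ((2 - m) / 2) = 1 := by
    rw [← rpow_add h2π, show m / 2 - 1 + (2 - m) / 2 = 0 by ring, rpow_zero]
  have hm1pow : (m - 1) ^ ((m - 1) / 2) * (m - 1) ^ ((2 - m) / 2) = (m - 1) ^ (1 / 2 : ℝ) := by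
    rw [← rpow_add hm1', show (m - 1) / 2 + (2 - m) / 2 = 1 / 2 by ring]
  calc _ = (2 * π) ^ (m / 2 - 1) * (2 * π) ^ ((2 - m) / 2) *
        ((m - 1) ^ ((m - 1) / 2) * (m - 1) ^ ((2 - m) / 2) / (m - 1) ^ (1 / 2 : ℝ)) *
        ((2 - m) ^ ((2 - m) / 2) / (2 - m) ^ ((2 - m) / 2)) := by ring
    _ = 1 := by
      rw [h2πpow, hm1pow, div_self (by positivity), div_self (by positivity), one_mul, one_mul]

/-- For `1 < m < 2` and the Gaussian kernel `G(x) = e^{−x²/2}/√(2π)`, the pair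
`(ν_∞, ρ_∞)` solves the nonlinear eigenvalue problem `ν_∞ ρ_∞^{m−1} = G ∗ ρ_∞` on
`ℝ`, and `ρ_∞` has unit mass. -/
theorem gaussian_limiting_profile (m : ℝ) (hm1 : 1 < m) (hm2 : m < 2) :
    (∫ x : ℝ, gaussProfile m x) = 1 ∧
    ∀ x : ℝ, nuInfty m * gaussProfile m x ^ (m - 1) =
      (Real.sqrt (2 * Real.pi))⁻¹ *
        ∫ y : ℝ, Real.exp (-(x - y) ^ 2 / 2) * gaussProfile m y := by
  have hσ : 0 < (m - 1) / (2 - m) := div_pos (by linarith) (by linarith)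
  have hvar : (m - 1) / (2 - m) / (m - 1) = 1 + (m - 1) / (2 - m) := by
    have : 2 - m ≠ 0 := by linarith
    have : m - 1 ≠ 0 := by linarith
    field_simp
    ring
  refine ⟨integral_gaussDensity hσ, fun x => ?_⟩
  rw [← integral_const_mul]
  simp_rw [← mul_assoc, ← gaussDensity_one, gaussProfile_eq_gaussDensity,
    integral_gaussDensity_sub_mul_gaussDensity one_pos hσ, gaussDensity_rpow hσ (sub_pos.2 hm1),
    ← mul_assoc, nuInfty_mul_eq_one hm1 hm2, one_mul, hvar]
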